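/- Normalization of the enriched-Dirichlet-process nested partition law: for all real numbers α > 0 and β > 0 and every finite set s with |s| = n, ∑_{P partition of s} α^{#P} · ∏_{B ∈ P} [ (|B| − 1)! · ( ∏_{i=0}^{|B|−1} (β + i) )^{−1} · ∑_{Q partition of B} β^{#Q} · ∏_{C ∈ Q} (|C| − 1)! ] = ∏_{i=0}^{n−1} (α + i). Equivalently, the nested random-partition prior induced by the enriched Dirichlet process derived in the proof of the paper's Proposition 1, p(𝒫_n) = (Γ(α)/Γ(α+n)) α^{M_n} ∏_{j=1}^{M_n} [ β^{M_{n,j}} · (Γ(β)Γ(n_j)/Γ(β+n_j)) · ∏_{l=1}^{M_{n,j}} Γ(n_{l∣j}) ] with constant lower-level concentration α_θ(φ) = β, sums to 1 over all nested partitions (a partition into φ-clusters together with a sub-partition of each φ-cluster into θ-subclusters) of n items. -/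

import Mathlib

/-!
For `θ` in a commutative semiring, the Ewens weight `θ ^ #P * ∏ B ∈ P, (#B - 1)!` of the
partitions of an `n`-set sums to the rising factorial `θ (θ + 1) ⋯ (θ + n - 1)`: a partition of
`insert x s` is a partition of `s` together with either a new block `{x}` (weight factor `θ`) or a
block `B` that `x` joins (factor `#B`), and these factors add up to `θ + #s`.
Applied with `θ = b` to each block, the inner sum cancels the normalising product and leaves
`(#B - 1)!`; the outer sum is then the same identity with `θ = a`.
-/

open Finset
open scoped Nat

namespace Finpartition

variable {α : Type*} [DecidableEq α] {s t B C : Finset α} {x : α}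

lemma notMem_of_mem_parts (P : Finpartition s) (hx : x ∉ s) (hC : C ∈ P.parts) : x ∉ C :=
  fun h => hx (P.le hC h)

lemma subset_of_mem_insert_empty (P : Finpartition s) (hB : B ∈ insert ∅ P.parts) :
    B ⊆ s := by
  rcases mem_insert.1 hB with rfl | hB
  exacts [empty_subset s, P.le hB]

/-- Adds `x` to the part `B` of `P`, where `B = ∅` stands for a new singleton part `{x}`. -/
def insertAt (hx : x ∉ s) (P : Finpartition s) (hB : B ∈ insert ∅ P.parts) :
    Finpartition (insert x s) where
  parts := insert (insert x B) (P.parts.erase B)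
  supIndep := by
    rw [supIndep_iff_pairwiseDisjoint, coe_insert]
    refine (P.disjoint.subset (by simp)).insert fun C hC _ => ?_
    obtain ⟨hCB, hC⟩ := mem_erase.1 hC
    refine disjoint_insert_left.2 ⟨P.notMem_of_mem_parts hx hC, ?_⟩
    rcases mem_insert.1 hB with rfl | hB
    · exact disjoint_empty_left C
    · exact P.disjoint hB hC hCB.symm
  sup_parts := by
    have hBs : B ∪ (P.parts.erase B).sup id = s := by
      rcases mem_insert.1 hB with rfl | hB
      · rw [erase_eq_of_notMem P.empty_notMem_parts, P.sup_parts, empty_union]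
      · have h := P.sup_parts
        rwa [← insert_erase hB, sup_insert] at h
    rw [sup_insert, id, sup_eq_union, insert_union, hBs]
  bot_notMem h := by
    rcases mem_insert.1 h with h | h
    · exact insert_ne_empty x B h.symm
    · exact P.empty_notMem_parts (mem_of_mem_erase h)

lemma parts_insertAt (hx : x ∉ s) (P : Finpartition s) (hB : B ∈ insert ∅ P.parts) :
    (P.insertAt hx hB).parts = insert (insert x B) (P.parts.erase B) := rfl

lemma parts_restrict (P : Finpartition t) (hst : s ⊆ t) :
    (P.restrict hst).parts = (P.parts.image (· ∩ s)).erase ∅ := rfl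

lemma restrict_insertAt (hx : x ∉ s) (P : Finpartition s) (hB : B ∈ insert ∅ P.parts) :
    (P.insertAt hx hB).restrict (subset_insert x s) = P := by
  have hid : ∀ C ∈ P.parts.erase B, C ∩ s = C := fun C hC =>
    inter_eq_left.2 (P.le (mem_of_mem_erase hC))
  refine Finpartition.ext ?_
  rw [parts_restrict, parts_insertAt, image_insert, image_congr hid, image_id',
    insert_inter_of_notMem hx, inter_eq_left.2 (P.subset_of_mem_insert_empty hB)]
  rcases mem_insert.1 hB with rfl | hB
  · simp
  · rw [insert_erase hB, erase_eq_of_notMem P.empty_notMem_parts]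

lemma part_insertAt (hx : x ∉ s) (P : Finpartition s) (hB : B ∈ insert ∅ P.parts) :
    (P.insertAt hx hB).part x = insert x B :=
  part_eq_of_mem _ (mem_insert_self _ _) (mem_insert_self _ _)

lemma parts_image_inter (Q : Finpartition (insert x s)) :
    Q.parts.image (· ∩ s) = insert (Q.part x ∩ s) (Q.parts.erase (Q.part x)) := by
  have hid : ∀ C ∈ Q.parts.erase (Q.part x), C ∩ s = C := fun C hC => by
    obtain ⟨hCx, hC⟩ := mem_erase.1 hC
    have hxC : x ∉ C := fun h => hCx (Q.part_eq_of_mem hC h).symm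
    exact inter_eq_left.2 ((subset_insert_iff_of_notMem hxC).1 (Q.le hC))
  conv_lhs => rw [← insert_erase (Q.part_mem.2 (mem_insert_self x s))]
  rw [image_insert, image_congr hid, image_id']

lemma part_inter_notMem_parts_erase (Q : Finpartition (insert x s)) :
    Q.part x ∩ s ∉ Q.parts.erase (Q.part x) := fun h => by
  obtain ⟨hne, hmem⟩ := mem_erase.1 h
  obtain ⟨y, hy⟩ := Q.nonempty_of_mem_parts hmem
  exact hne (Q.eq_of_mem_parts hmem (Q.part_mem.2 (mem_insert_self x s)) hy
    (mem_of_mem_inter_left hy))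

lemma part_inter_mem_restrict (Q : Finpartition (insert x s)) :
    Q.part x ∩ s ∈ insert ∅ (Q.restrict (subset_insert x s)).parts := by
  rw [parts_restrict, parts_image_inter, mem_insert, mem_erase]
  exact (em _).imp id fun h => ⟨h, mem_insert_self _ _⟩

lemma insertAt_restrict (hx : x ∉ s) (Q : Finpartition (insert x s)) :
    (Q.restrict (subset_insert x s)).insertAt hx (part_inter_mem_restrict Q) = Q := by
  have hxQ : x ∈ Q.part x := Q.mem_part_self.2 (mem_insert_self x s)
  refine Finpartition.ext ?_
  rw [parts_insertAt, parts_restrict, parts_image_inter, erase_right_comm,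
    erase_insert (part_inter_notMem_parts_erase Q),
    erase_eq_of_notMem fun h => Q.empty_notMem_parts (mem_of_mem_erase h),
    insert_inter_distrib, insert_eq_of_mem hxQ, inter_eq_left.2 (Q.part_subset x),
    insert_erase (Q.part_mem.2 (mem_insert_self x s))]

def insertEquiv (hx : x ∉ s) :
    (Σ P : Finpartition s, (insert ∅ P.parts : Finset (Finset α))) ≃
      Finpartition (insert x s) where
  toFun p := p.1.insertAt hx p.2.2
  invFun Q := ⟨Q.restrict (subset_insert x s), ⟨Q.part x ∩ s, part_inter_mem_restrict Q⟩⟩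
  left_inv := fun ⟨P, B, hB⟩ => Sigma.subtype_ext (restrict_insertAt hx P hB) <| by
    simp only [part_insertAt, insert_inter_of_notMem hx,
      inter_eq_left.2 (P.subset_of_mem_insert_empty hB)]
  right_inv := insertAt_restrict hx

section Ewens

variable {R : Type*} [CommSemiring R]

def ewensWeight (θ : R) (P : Finpartition s) : R :=
  θ ^ #P.parts * ∏ B ∈ P.parts, ((#B - 1)! : R)

lemma ewensWeight_insertAt (θ : R) (hx : x ∉ s) (P : Finpartition s)
    (hB : B ∈ insert ∅ P.parts) :
    ewensWeight θ (P.insertAt hx hB) = (if B = ∅ then θ else (#B : R)) * ewensWeight θ P := by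
  have hxB : x ∉ B := fun h => hx (P.subset_of_mem_insert_empty hB h)
  have hnew : insert x B ∉ P.parts.erase B := fun h =>
    P.notMem_of_mem_parts hx (mem_of_mem_erase h) (mem_insert_self x B)
  rw [ewensWeight, parts_insertAt, card_insert_of_notMem hnew, prod_insert hnew,
    card_insert_of_notMem hxB, ewensWeight]
  rcases mem_insert.1 hB with rfl | hB
  · simp only [erase_eq_of_notMem P.empty_notMem_parts, if_pos, card_empty]
    ring
  · have hcard : #B ≠ 0 := (P.nonempty_of_mem_parts hB).card_pos.ne'
    rw [if_neg (P.ne_empty hB), card_erase_of_mem hB, ← mul_prod_erase _ _ hB,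
      Nat.add_sub_cancel, ← Nat.mul_factorial_pred hcard,
      Nat.sub_add_cancel (card_pos.2 ⟨B, hB⟩)]
    push_cast
    ring

lemma sum_ewensWeight_insert (θ : R) (hx : x ∉ s) :
    ∑ Q : Finpartition (insert x s), ewensWeight θ Q =
      (θ + #s) * ∑ P : Finpartition s, ewensWeight θ P := by
  rw [← (insertEquiv hx).sum_comp, Fintype.sum_sigma, mul_sum]
  refine sum_congr rfl fun P _ => ?_
  have hfactor : ∑ B ∈ insert ∅ P.parts, (if B = ∅ then θ else (#B : R)) = θ + #s := by
    rw [sum_insert P.empty_notMem_parts, if_pos rfl,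
      sum_congr rfl fun B hB => if_neg (P.ne_empty hB), ← Nat.cast_sum, P.sum_card_parts]
  simp only [insertEquiv, Equiv.coe_fn_mk, ewensWeight_insertAt]
  rw [sum_coe_sort (insert ∅ P.parts)
      fun B => (if B = ∅ then θ else (#B : R)) * ewensWeight θ P,
    ← sum_mul, hfactor]

theorem sum_ewensWeight (θ : R) (s : Finset α) :
    ∑ P : Finpartition s, ewensWeight θ P = ∏ i ∈ range #s, (θ + i) := by
  induction s using Finset.induction_on with
  | empty =>
    have : Unique (Finpartition (∅ : Finset α)) := inferInstanceAs (Unique (Finpartition ⊥))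
    simp [ewensWeight, (default : Finpartition (∅ : Finset α)).parts_eq_empty_iff.2 rfl]
  | insert x s hx ih =>
    rw [sum_ewensWeight_insert θ hx, ih, card_insert_of_notMem hx, prod_range_succ, mul_comm]

end Ewens

end Finpartition

theorem edp_nested_partition_normalization_general
    {α : Type*} [DecidableEq α]
    (a b : ℝ) (hb : 0 < b)
    (s : Finset α) (n : ℕ) (hn : s.card = n) :
    ∑ P : Finpartition s,
        a ^ P.parts.card *
          ∏ B ∈ P.parts,
            (((B.card - 1).factorial : ℝ) *
              (∏ i ∈ Finset.range B.card, (b + i))⁻¹ *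
              ∑ Q : Finpartition B,
                b ^ Q.parts.card * ∏ C ∈ Q.parts, ((C.card - 1).factorial : ℝ)) =
      ∏ i ∈ Finset.range n, (a + i) := by
  have hblock_factor : ∀ B : Finset α, ((#B - 1)! : ℝ) * (∏ i ∈ range #B, (b + i))⁻¹ *
      ∑ Q : Finpartition B, Finpartition.ewensWeight b Q = (#B - 1)! := fun B => by
    rw [Finpartition.sum_ewensWeight,
      inv_mul_cancel_right₀ (prod_pos fun i _ => by positivity).ne']
  simp only [Finpartition.ewensWeight] at hblock_factor
  simp only [hblock_factor]
  exact hn ▸ Finpartition.sum_ewensWeight a s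

/-- **Normalization of the enriched-Dirichlet-process nested partition law
(Proposition 1).**  For all reals `a > 0`, `b > 0` and every finite set `s` with `n`
elements,
`∑_{P partition of s} a^{#P} ∏_{B ∈ P} [ (|B|−1)! · (∏_{i<|B|}(b+i))⁻¹ ·
∑_{Q partition of B} b^{#Q} ∏_{C ∈ Q} (|C|−1)! ] = ∏_{i<n} (a+i)`.
Equivalently, the nested random-partition prior induced by the enriched Dirichlet
process with upper-level concentration `a` and constant lower-level concentration `b`
sums to `1` over all nested partitions of `n` items. -/
theorem edp_nested_partition_normalization
    {α : Type*} [DecidableEq α]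
    (a b : ℝ) (ha : 0 < a) (hb : 0 < b)
    (s : Finset α) (n : ℕ) (hn : s.card = n) :
    ∑ P : Finpartition s,
        a ^ P.parts.card *
          ∏ B ∈ P.parts,
            (((B.card - 1).factorial : ℝ) *
              (∏ i ∈ Finset.range B.card, (b + i))⁻¹ *
              ∑ Q : Finpartition B,
                b ^ Q.parts.card * ∏ C ∈ Q.parts, ((C.card - 1).factorial : ℝ)) =
      ∏ i ∈ Finset.range n, (a + i) :=
  edp_nested_partition_normalization_general a b hb s n hn
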